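/- arXiv:1102.0568 — 2 statements merged into one kernel-verified Lean document; each statement's English description precedes it below -/
import Mathlib

section
/- Let p be a prime, u ∈ Z_p[[x]] with u(0)=0, u'(0) a unit, and suppose the Weierstrass degree of u^{∘p^{n−δ}}(x) − x equals p^n (where δ=1 for p>2 and δ=2 for p=2). Write u^{∘p^{n−δ}}(x) − x = Σ b_i x^i. Let π be an element of an algebraic closure of Q_p with v_p(π) = 1/((p−1)p^n). Then u^{∘p^{n−δ}}(π) ≡ π + b_{p^n} π^{p^n} mod π^{p^n+1}, and for any integer j ≥ 0, u^{∘jp^{n−δ}}(π) ≡ π + j·b_{p^n} π^{p^n} mod π^{p^n+1}. -/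
open PowerSeries Filter

noncomputable section

/-- Composition `f(g(x))` of formal power series (intended for `g` with zero constant term). -/
def compPS {R : Type*} [CommSemiring R] (f g : PowerSeries R) : PowerSeries R :=
  PowerSeries.mk fun n =>
    ∑ k ∈ Finset.range (n + 1), PowerSeries.coeff (R := R) k f * PowerSeries.coeff (R := R) n (g ^ k)

/-- `n`-fold compositional iterate of a power series. -/
def iterPS {R : Type*} [CommSemiring R] (f : PowerSeries R) : ℕ → PowerSeries R
  | 0 => PowerSeries.X
  | n + 1 => compPS f (iterPS f n)

/-- Evaluation of a power series at a point of a normed field. -/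
def evalT {R K : Type*} [CommSemiring R] [NormedField K] [Algebra R K]
    (f : PowerSeries R) (x : K) : K :=
  ∑' n : ℕ, algebraMap R K (PowerSeries.coeff (R := R) n f) * x ^ n

/-!
Write `T = u^{∘p^{n-δ}}`, so that `T(x) = x + w(x)`. The coefficients `b_i`, `i < p^n`, are
divisible by `p`, hence of norm `≤ |π|^{(p-1)p^n} ≤ |π|^{p^n}`. On the disc `|z| ≤ |π|`, which `u`
preserves, this gives `w(π) ≡ b_{p^n} π^{p^n}` and, as `p^n ≥ 2`, `w(z) ≡ w(π)` whenever
`z ≡ π mod π^{p^n}` (both mod `π^{p^n+1}`). By the ultrametric inequality the orbit of `π` stays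
`≡ π mod π^{p^n}`, and induction on `j` gives `T^j(π) ≡ π + j b_{p^n} π^{p^n}`.

The algebraic closure `K` need not be complete, so all series are summed in the complete
subfield `ℚ_p(π)`.
-/

theorem IsComplete.exists_hasSum_mem {ι G S : Type*} [NormedAddCommGroup G] [SetLike S G]
    [AddSubmonoidClass S G] {E : S} (hE : IsComplete (E : Set G)) {f : ι → G}
    (hfE : ∀ i, f i ∈ E) (hf : Summable fun i => ‖f i‖) : ∃ a ∈ E, HasSum f a :=
  hE _ (cauchySeq_finset_of_norm_bounded hf fun _ => le_rfl) <| le_principal_iff.mpr <|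
    mem_map.mpr <| Eventually.of_forall fun _ => sum_mem fun i _ => hfE i

namespace IsUltrametricDist

theorem norm_le_of_hasSum {ι G : Type*} [NormedAddCommGroup G] [IsUltrametricDist G]
    {f : ι → G} {a : G} {C : ℝ} (ha : HasSum f a) (hC : 0 ≤ C) (hf : ∀ i, ‖f i‖ ≤ C) :
    ‖a‖ ≤ C :=
  ha.tsum_eq ▸ norm_tsum_le_of_forall_le_of_nonneg hC hf

theorem norm_pow_succ_sub_pow_succ_le {R : Type*} [SeminormedCommRing R] [NormOneClass R]
    [IsUltrametricDist R] {x y : R} {r : ℝ} (hx : ‖x‖ ≤ r) (hy : ‖y‖ ≤ r) (n : ℕ) :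
    ‖x ^ (n + 1) - y ^ (n + 1)‖ ≤ r ^ n * ‖x - y‖ := by
  have hr : 0 ≤ r := (norm_nonneg x).trans hx
  rw [← geom_sum₂_mul]
  refine (norm_mul_le _ _).trans (mul_le_mul_of_nonneg_right ?_ (norm_nonneg _))
  refine norm_sum_le_of_forall_le_of_nonneg (pow_nonneg hr n) fun i hi => ?_
  have hi : i ≤ n := Nat.lt_succ_iff.mp (Finset.mem_range.mp hi)
  calc ‖x ^ i * y ^ (n + 1 - 1 - i)‖ ≤ r ^ i * r ^ (n - i) := by
        refine (norm_mul_le _ _).trans (mul_le_mul ?_ ?_ (norm_nonneg _) (pow_nonneg hr _))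
        · exact (_root_.norm_pow_le x i).trans (pow_le_pow_left₀ (norm_nonneg x) hx i)
        · exact (_root_.norm_pow_le y _).trans (pow_le_pow_left₀ (norm_nonneg y) hy _)
    _ = r ^ n := by rw [← pow_add, Nat.add_sub_cancel' hi]

theorem norm_iterate_sub_natCast_mul_le {R : Type*} [SeminormedRing R] [NormOneClass R]
    [IsUltrametricDist R] {T : R → R} {S : Set R} {x c : R} {ε δ : ℝ} (hT : Set.MapsTo T S S)
    (hx : x ∈ S) (hc : ‖c‖ ≤ δ) (hεδ : ε ≤ δ) (hlead : ‖T x - (x + c)‖ ≤ ε)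
    (hstable : ∀ z ∈ S, ‖z - x‖ ≤ δ → ‖(T z - z) - (T x - x)‖ ≤ ε) (j : ℕ) :
    ‖T^[j] x - (x + j * c)‖ ≤ ε := by
  induction j with
  | zero => simpa using (norm_nonneg _).trans hlead
  | succ j ih =>
    set z := T^[j] x
    have hjc : ‖(j : R) * c‖ ≤ δ :=
      (norm_mul_le _ _).trans <| (mul_le_of_le_one_left (norm_nonneg c)
        (norm_natCast_le_one R j)).trans hc
    have hzx : ‖z - x‖ ≤ δ := by
      rw [← sub_add_cancel (z - x) (j * c), sub_sub]
      exact (norm_add_le_max _ _).trans (max_le (ih.trans hεδ) hjc)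
    have hstep : T^[j + 1] x - (x + (j + 1 : ℕ) * c) =
        (z - (x + j * c)) + ((T z - z) - (T x - x)) + (T x - (x + c)) := by
      rw [Function.iterate_succ_apply']; push_cast; rw [add_mul, one_mul]; abel
    rw [hstep]
    exact (norm_add_le_max _ _).trans <| max_le ((norm_add_le_max _ _).trans <|
      max_le ih (hstable z (hT.iterate j hx) hzx)) hlead

end IsUltrametricDist

theorem PowerSeries.coeff_pow_eq_zero_of_lt {R : Type*} [CommSemiring R] {g : R⟦X⟧}
    (hg0 : coeff 0 g = 0) {m k : ℕ} (h : m < k) : coeff m (g ^ k) = 0 := by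
  have hX : X ∣ g := X_dvd_iff.mpr (by rwa [← coeff_zero_eq_constantCoeff_apply])
  exact X_pow_dvd_iff.mp (pow_dvd_pow_of_dvd hX k) m h

theorem coeff_zero_iterPS {R : Type*} [CommSemiring R] {f : R⟦X⟧} (hf0 : coeff 0 f = 0) :
    ∀ m, coeff 0 (iterPS f m) = 0
  | 0 => by simp [iterPS]
  | _ + 1 => by simp [iterPS, compPS, hf0]

section Evaluation

variable {R K : Type*} [CommSemiring R] [NormedField K] [Algebra R K]
  {E : Subalgebra R K} {y : K}

theorem evalT_X (y : K) : evalT (X : R⟦X⟧) y = y := by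
  rw [evalT, tsum_eq_single 1 fun i hi => by simp [coeff_X, hi]]
  simp

theorem evalT_one (y : K) : evalT (1 : R⟦X⟧) y = 1 := by
  rw [evalT, tsum_eq_single 0 fun i hi => by simp [coeff_one, hi]]
  simp

theorem coeff_mul_pow_mem (f : R⟦X⟧) (hyE : y ∈ E) (i : ℕ) :
    algebraMap R K (coeff i f) * y ^ i ∈ E :=
  mul_mem (E.algebraMap_mem _) (pow_mem hyE i)

variable (hR : ∀ a : R, ‖algebraMap R K a‖ ≤ 1)
include hR

theorem norm_coeff_mul_pow_le (f : R⟦X⟧) (y : K) (i : ℕ) :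
    ‖algebraMap R K (coeff i f) * y ^ i‖ ≤ ‖y‖ ^ i := by
  rw [norm_mul, norm_pow]
  exact mul_le_of_le_one_left (pow_nonneg (norm_nonneg y) i) (hR _)

theorem norm_evalT_le_self [IsUltrametricDist K] {f : R⟦X⟧} (hf0 : coeff 0 f = 0)
    (hy : ‖y‖ ≤ 1) : ‖evalT f y‖ ≤ ‖y‖ := by
  refine IsUltrametricDist.norm_tsum_le_of_forall_le_of_nonneg (norm_nonneg y) fun i => ?_
  rcases i with _ | i
  · simp [hf0]
  · exact (norm_coeff_mul_pow_le hR f y _).trans (pow_le_of_le_one (norm_nonneg y) hy (by omega))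

variable (hE : IsComplete (E : Set K))
include hE

theorem exists_hasSum_coeff_mul_pow (f : R⟦X⟧) (hyE : y ∈ E) (hy : ‖y‖ < 1) :
    ∃ a ∈ E, HasSum (fun i => algebraMap R K (coeff i f) * y ^ i) a :=
  hE.exists_hasSum_mem (coeff_mul_pow_mem f hyE) <|
    .of_nonneg_of_le (fun _ => norm_nonneg _) (norm_coeff_mul_pow_le hR f y)
      (summable_geometric_of_lt_one (norm_nonneg y) hy)

theorem hasSum_evalT (f : R⟦X⟧) (hyE : y ∈ E) (hy : ‖y‖ < 1) :
    HasSum (fun i => algebraMap R K (coeff i f) * y ^ i) (evalT f y) := by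
  obtain ⟨a, -, ha⟩ := exists_hasSum_coeff_mul_pow hR hE f hyE hy
  rwa [evalT, ha.tsum_eq]

theorem evalT_mem (f : R⟦X⟧) (hyE : y ∈ E) (hy : ‖y‖ < 1) : evalT f y ∈ E := by
  obtain ⟨a, haE, ha⟩ := exists_hasSum_coeff_mul_pow hR hE f hyE hy
  rwa [evalT, ha.tsum_eq]

theorem evalT_add (f g : R⟦X⟧) (hyE : y ∈ E) (hy : ‖y‖ < 1) :
    evalT (f + g) y = evalT f y + evalT g y := by
  refine HasSum.tsum_eq ?_
  simpa only [map_add, add_mul] using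
    (hasSum_evalT hR hE f hyE hy).add (hasSum_evalT hR hE g hyE hy)

theorem evalT_mul (f g : R⟦X⟧) (hyE : y ∈ E) (hy : ‖y‖ < 1) :
    evalT (f * g) y = evalT f y * evalT g y := by
  set t : R⟦X⟧ → ℕ → K := fun h i => algebraMap R K (coeff i h) * y ^ i
  have hprod : Summable fun q : ℕ × ℕ => t f q.1 * t g q.2 := by
    obtain ⟨_, -, h⟩ := hE.exists_hasSum_mem
      (fun q => mul_mem (coeff_mul_pow_mem f hyE q.1) (coeff_mul_pow_mem g hyE q.2)) <|
      .of_nonneg_of_le (fun _ => norm_nonneg _)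
        (fun q => (norm_mul _ _).trans_le <| mul_le_mul (norm_coeff_mul_pow_le hR f y q.1)
          (norm_coeff_mul_pow_le hR g y q.2) (norm_nonneg _) (pow_nonneg (norm_nonneg y) _))
        (.mul_of_nonneg (summable_geometric_of_lt_one (norm_nonneg y) hy)
          (summable_geometric_of_lt_one (norm_nonneg y) hy)
          (fun i => pow_nonneg (norm_nonneg y) i) fun i => pow_nonneg (norm_nonneg y) i)
    exact h.summable
  rw [evalT, evalT, evalT, (hasSum_evalT hR hE f hyE hy).summable
    |>.tsum_mul_tsum_eq_tsum_sum_antidiagonal (hasSum_evalT hR hE g hyE hy).summable hprod]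
  refine tsum_congr fun n => ?_
  rw [coeff_mul, map_sum, Finset.sum_mul]
  refine Finset.sum_congr rfl fun q hq => ?_
  rw [← Finset.HasAntidiagonal.mem_antidiagonal.mp hq, map_mul, pow_add]
  ring

theorem evalT_pow (g : R⟦X⟧) (hyE : y ∈ E) (hy : ‖y‖ < 1) (k : ℕ) :
    evalT (g ^ k) y = evalT g y ^ k := by
  induction k with
  | zero => simpa using evalT_one y
  | succ k ih => rw [pow_succ, evalT_mul hR hE _ _ hyE hy, ih, pow_succ]

-- The nonzero terms have `k ≤ m`, so they are bounded by `‖y‖ ^ m ≤ √‖y‖ ^ m * √‖y‖ ^ k`.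
theorem summable_coeff_mul_coeff_pow_mul_pow (f g : R⟦X⟧) (hg0 : coeff 0 g = 0) (hyE : y ∈ E)
    (hy : ‖y‖ < 1) : Summable (Function.uncurry fun m k =>
      algebraMap R K (coeff k f) * (algebraMap R K (coeff m (g ^ k)) * y ^ m)) := by
  set s := √‖y‖
  have hs0 : 0 ≤ s := Real.sqrt_nonneg _
  have hs1 : s < 1 := (Real.sqrt_lt_sqrt (norm_nonneg y) hy).trans_eq Real.sqrt_one
  have hbound : ∀ q : ℕ × ℕ, ‖algebraMap R K (coeff q.2 f) *
      (algebraMap R K (coeff q.1 (g ^ q.2)) * y ^ q.1)‖ ≤ s ^ q.1 * s ^ q.2 := by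
    rintro ⟨m, k⟩
    rcases le_or_gt k m with hkm | hmk
    · calc _ ≤ ‖y‖ ^ m := by
            rw [norm_mul]
            exact (mul_le_of_le_one_left (norm_nonneg _) (hR _)).trans
              (norm_coeff_mul_pow_le hR _ y m)
        _ = s ^ m * s ^ m := by rw [← mul_pow, Real.mul_self_sqrt (norm_nonneg y)]
        _ ≤ s ^ m * s ^ k :=
          mul_le_mul_of_nonneg_left (pow_le_pow_of_le_one hs0 hs1.le hkm) (pow_nonneg hs0 m)
    · simp [coeff_pow_eq_zero_of_lt hg0 hmk]
      positivity
  obtain ⟨_, -, h⟩ := hE.exists_hasSum_mem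
    (fun q => mul_mem (E.algebraMap_mem _) (coeff_mul_pow_mem (g ^ q.2) hyE q.1)) <|
    .of_nonneg_of_le (fun _ => norm_nonneg _) hbound
      (.mul_of_nonneg (summable_geometric_of_lt_one hs0 hs1) (summable_geometric_of_lt_one hs0 hs1)
        (fun i => pow_nonneg hs0 i) fun i => pow_nonneg hs0 i)
  exact h.summable

theorem evalT_compPS (f g : R⟦X⟧) (hg0 : coeff 0 g = 0) (hyE : y ∈ E) (hy : ‖y‖ < 1) :
    evalT (compPS f g) y = evalT f (evalT g y) := by
  set h : ℕ → ℕ → K := fun m k =>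
    algebraMap R K (coeff k f) * (algebraMap R K (coeff m (g ^ k)) * y ^ m)
  have hsum : Summable (Function.uncurry h) :=
    summable_coeff_mul_coeff_pow_mul_pow hR hE f g hg0 hyE hy
  have hrow : ∀ m, HasSum (h m) (algebraMap R K (coeff m (compPS f g)) * y ^ m) := by
    intro m
    have hvanish : ∀ k ∉ Finset.range (m + 1), h m k = 0 := fun k hk => by
      simp [h, coeff_pow_eq_zero_of_lt hg0 (by simpa using hk : m < k)]
    convert hasSum_sum_of_ne_finset_zero (L := .unconditional ℕ) hvanish using 1
    simp [h, compPS, Finset.sum_mul, mul_assoc]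
  have hcol : ∀ k, HasSum (fun m => h m k) (algebraMap R K (coeff k f) * evalT g y ^ k) := by
    intro k
    rw [← evalT_pow hR hE g hyE hy]
    exact (hasSum_evalT hR hE (g ^ k) hyE hy).mul_left _
  calc evalT (compPS f g) y = ∑' m, ∑' k, h m k := tsum_congr fun m => (hrow m).tsum_eq.symm
    _ = ∑' k, ∑' m, h m k :=
      (hsum.tsum_comm' (fun m => (hrow m).summable) fun k => (hcol k).summable).symm
    _ = evalT f (evalT g y) := tsum_congr fun k => (hcol k).tsum_eq

theorem evalT_iterPS {f : R⟦X⟧} (hf0 : coeff 0 f = 0) (hyE : y ∈ E) (hy : ‖y‖ < 1) (m : ℕ) :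
    evalT (iterPS f m) y = (evalT f)^[m] y := by
  induction m with
  | zero => exact evalT_X y
  | succ m ih =>
    rw [iterPS, evalT_compPS hR hE _ _ (coeff_zero_iterPS hf0 m) hyE hy, ih,
      Function.iterate_succ_apply']

end Evaluation

section Estimates

variable {R K : Type*} [CommSemiring R] [NormedField K] [IsUltrametricDist K] [Algebra R K]
  (hR : ∀ a : R, ‖algebraMap R K a‖ ≤ 1) {E : Subalgebra R K} (hE : IsComplete (E : Set K))
  {w : R⟦X⟧} {π : K} {d : ℕ}
include hR hE

theorem norm_evalT_sub_coeff_mul_pow_le (hπE : π ∈ E) (hπ : ‖π‖ < 1) (hw0 : coeff 0 w = 0)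
    (hsmall : ∀ i < d, ‖algebraMap R K (coeff i w)‖ ≤ ‖π‖ ^ d) :
    ‖evalT w π - algebraMap R K (coeff d w) * π ^ d‖ ≤ ‖π‖ ^ (d + 1) := by
  have hmono : ∀ {a b : ℕ}, a ≤ b → ‖π‖ ^ b ≤ ‖π‖ ^ a :=
    pow_le_pow_of_le_one (norm_nonneg π) hπ.le
  refine IsUltrametricDist.norm_le_of_hasSum
    ((hasSum_evalT hR hE w hπE hπ).sub (hasSum_ite_eq d _)) (by positivity) fun i => ?_
  rcases lt_trichotomy i d with hi | rfl | hi
  · rw [if_neg hi.ne, sub_zero]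
    rcases i with _ | i
    · simp [hw0]
    · calc _ ≤ ‖π‖ ^ d * ‖π‖ ^ (i + 1) := by
            rw [norm_mul, norm_pow]
            exact mul_le_mul_of_nonneg_right (hsmall _ hi) (by positivity)
        _ ≤ _ := by rw [← pow_add]; exact hmono (by omega)
  · simp
  · rw [if_neg hi.ne', sub_zero]
    exact (norm_coeff_mul_pow_le hR w π i).trans (hmono hi)

theorem norm_evalT_sub_evalT_le (hd : 2 ≤ d) {z : K} (hzE : z ∈ E) (hπE : π ∈ E)
    (hz : ‖z‖ ≤ ‖π‖) (hπ : ‖π‖ < 1) (hzπ : ‖z - π‖ ≤ ‖π‖ ^ d)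
    (hsmall : ∀ i < d, ‖algebraMap R K (coeff i w)‖ ≤ ‖π‖ ^ d) :
    ‖evalT w z - evalT w π‖ ≤ ‖π‖ ^ (d + 1) := by
  have hmono : ∀ {a b : ℕ}, a ≤ b → ‖π‖ ^ b ≤ ‖π‖ ^ a :=
    pow_le_pow_of_le_one (norm_nonneg π) hπ.le
  refine IsUltrametricDist.norm_le_of_hasSum ((hasSum_evalT hR hE w hzE (hz.trans_lt hπ)).sub
    (hasSum_evalT hR hE w hπE hπ)) (by positivity) fun i => ?_
  rw [← mul_sub, norm_mul]
  rcases i with _ | i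
  · simp [(by positivity : (0 : ℝ) ≤ ‖π‖ ^ (d + 1))]
  have hdiff : ‖z ^ (i + 1) - π ^ (i + 1)‖ ≤ ‖π‖ ^ (i + d) :=
    (IsUltrametricDist.norm_pow_succ_sub_pow_succ_le hz le_rfl i).trans <| by
      rw [pow_add]; exact mul_le_mul_of_nonneg_left hzπ (by positivity)
  rcases lt_or_ge (i + 1) d with hi | hi
  · calc _ ≤ ‖π‖ ^ d * ‖π‖ ^ (i + d) :=
          mul_le_mul (hsmall _ hi) hdiff (norm_nonneg _) (by positivity)
      _ ≤ _ := by rw [← pow_add]; exact hmono (by omega)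
  · calc _ ≤ 1 * ‖π‖ ^ (i + d) := mul_le_mul (hR _) hdiff (norm_nonneg _) zero_le_one
      _ ≤ _ := by rw [one_mul]; exact hmono (by omega)

theorem norm_iterate_evalT_sub_le {u : R⟦X⟧} (hu0 : coeff 0 u = 0) {N : ℕ}
    (hw : iterPS u N = w + X) (hd : 2 ≤ d) (hπE : π ∈ E) (hπ : ‖π‖ < 1)
    (hsmall : ∀ i < d, ‖algebraMap R K (coeff i w)‖ ≤ ‖π‖ ^ d) (j : ℕ) :
    ‖((evalT u)^[N])^[j] π - (π + j * (algebraMap R K (coeff d w) * π ^ d))‖ ≤ ‖π‖ ^ (d + 1) := by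
  set S := {z | z ∈ E ∧ ‖z‖ ≤ ‖π‖}
  have hπS : π ∈ S := ⟨hπE, le_rfl⟩
  have hw0 : coeff 0 w = 0 := by
    simpa [hw] using coeff_zero_iterPS hu0 N
  have hT : ∀ z ∈ S, (evalT u)^[N] z = z + evalT w z := fun z hz => by
    rw [← evalT_iterPS hR hE hu0 hz.1 (hz.2.trans_lt hπ), hw,
      evalT_add hR hE _ _ hz.1 (hz.2.trans_lt hπ), evalT_X, add_comm]
  have hmaps : Set.MapsTo (evalT u) S S := fun z hz =>
    ⟨evalT_mem hR hE u hz.1 (hz.2.trans_lt hπ),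
      (norm_evalT_le_self hR hu0 (hz.2.trans hπ.le)).trans hz.2⟩
  refine IsUltrametricDist.norm_iterate_sub_natCast_mul_le (hmaps.iterate N) hπS
    (δ := ‖π‖ ^ d) ?_ (pow_le_pow_of_le_one (norm_nonneg π) hπ.le (Nat.le_succ d)) ?_ ?_ j
  · rw [norm_mul, norm_pow]
    exact mul_le_of_le_one_left (by positivity) (hR _)
  · rw [hT π hπS, add_sub_add_left_eq_sub]
    exact norm_evalT_sub_coeff_mul_pow_le hR hE hπE hπ hw0 hsmall
  · intro z hz hzπ
    rw [hT z hz, hT π hπS, add_sub_cancel_left, add_sub_cancel_left]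
    exact norm_evalT_sub_evalT_le hR hE hd hz.1 hπE hz.2 hπ hzπ hsmall

end Estimates

theorem IntermediateField.isComplete_of_finiteDimensional {𝕜 K : Type*} [NontriviallyNormedField 𝕜]
    [CompleteSpace 𝕜] [NormedField K] [Algebra 𝕜 K] (h𝕜 : ∀ c : 𝕜, ‖algebraMap 𝕜 K c‖ = ‖c‖)
    (F : IntermediateField 𝕜 K) [FiniteDimensional 𝕜 F] : IsComplete (F : Set K) := by
  let _ : NormedSpace 𝕜 K := { norm_smul_le := fun c y => by rw [Algebra.smul_def, norm_mul, h𝕜] }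
  exact Submodule.complete_of_finiteDimensional (Subalgebra.toSubmodule F.toSubalgebra)

theorem PadicInt.norm_le_inv_of_not_isUnit {p : ℕ} [Fact p.Prime] {z : ℤ_[p]} (hz : ¬IsUnit z) :
    ‖z‖ ≤ (p : ℝ)⁻¹ := by
  simpa [zpow_neg_one] using (PadicInt.norm_le_pow_iff_norm_lt_pow_add_one z (-1)).mpr
    (by simpa using PadicInt.not_isUnit_iff.mp hz)

theorem stmt_13_general (p : ℕ) [Fact p.Prime]
    {K : Type*} [NormedField K] [IsUltrametricDist K]
    [Algebra ℚ_[p] K] [Algebra ℤ_[p] K] [IsScalarTower ℤ_[p] ℚ_[p] K]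
    [IsAlgClosure ℚ_[p] K]
    (hK : ∀ x : ℚ_[p], ‖algebraMap ℚ_[p] K x‖ = ‖x‖)
    (u : PowerSeries ℤ_[p])
    (hu0 : PowerSeries.coeff (R := ℤ_[p]) 0 u = 0)
    (δ n : ℕ) (hδ : δ = if p = 2 then 2 else 1) (hnδ : δ ≤ n)
    (w : PowerSeries ℤ_[p]) (hw : w = iterPS u (p ^ (n - δ)) - PowerSeries.X)
    -- the Weierstrass degree of `u^{∘p^{n-δ}}(x) - x` equals `p^n`
    (hwlt : ∀ i < p ^ n, ¬ IsUnit (PowerSeries.coeff (R := ℤ_[p]) i w))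
    -- `π` has `v_p(π) = 1/((p-1)p^n)`
    (π : K) (hπv : ‖π‖ ^ ((p - 1) * p ^ n) = (p : ℝ)⁻¹) :
    -- `u^{∘p^{n-δ}}(π) ≡ π + b_{p^n} π^{p^n} mod π^{p^n + 1}`
    ‖(fun x => evalT u x)^[p ^ (n - δ)] π -
        (π + algebraMap ℤ_[p] K (PowerSeries.coeff (R := ℤ_[p]) (p ^ n) w) * π ^ (p ^ n))‖ ≤
      ‖π‖ ^ (p ^ n + 1) ∧
    -- `u^{∘jp^{n-δ}}(π) ≡ π + j·b_{p^n} π^{p^n} mod π^{p^n + 1}` for every `j ≥ 0`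
    ∀ j : ℕ, ‖(fun x => evalT u x)^[j * p ^ (n - δ)] π -
        (π + (j : K) * algebraMap ℤ_[p] K (PowerSeries.coeff (R := ℤ_[p]) (p ^ n) w) * π ^ (p ^ n))‖ ≤
      ‖π‖ ^ (p ^ n + 1) := by
  have hp := (Fact.out : p.Prime).two_le
  have hd : 2 ≤ p ^ n := hp.trans (Nat.le_self_pow (by split_ifs at hδ <;> omega) p)
  have hnorm (a : ℤ_[p]) : ‖algebraMap ℤ_[p] K a‖ = ‖a‖ := by
    rw [IsScalarTower.algebraMap_apply ℤ_[p] ℚ_[p] K, hK]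
    exact PadicInt.padic_norm_e_of_padicInt a
  have hR (a : ℤ_[p]) : ‖algebraMap ℤ_[p] K a‖ ≤ 1 := (hnorm a).trans_le a.norm_le_one
  have hπ : ‖π‖ < 1 := (pow_lt_one_iff_of_nonneg (norm_nonneg π)
    (Nat.mul_pos (by omega) (by positivity)).ne').mp <|
    hπv ▸ inv_lt_one_of_one_lt₀ (by exact_mod_cast hp)
  set E := (IntermediateField.adjoin ℚ_[p] {π}).toSubalgebra.restrictScalars ℤ_[p]
  have hE : IsComplete (E : Set K) :=
    have := IntermediateField.adjoin.finiteDimensional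
      (IsAlgClosure.isAlgebraic (R := ℚ_[p]) (K := K) |>.isAlgebraic π).isIntegral
    IntermediateField.isComplete_of_finiteDimensional hK _
  have hπE : π ∈ E := IntermediateField.mem_adjoin_simple_self ℚ_[p] π
  have hsmall : ∀ i < p ^ n, ‖algebraMap ℤ_[p] K (coeff i w)‖ ≤ ‖π‖ ^ p ^ n := fun i hi =>
    (hnorm _).trans_le <| (PadicInt.norm_le_inv_of_not_isUnit (hwlt i hi)).trans <|
      hπv ▸ pow_le_pow_of_le_one (norm_nonneg π) hπ.le (Nat.le_mul_of_pos_left _ (by omega))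
  have key := norm_iterate_evalT_sub_le hR hE hu0 (eq_sub_iff_add_eq.mp hw).symm hd hπE hπ hsmall
  refine ⟨by simpa using key 1, fun j => ?_⟩
  rw [mul_comm, Function.iterate_mul, mul_assoc]
  exact key j

theorem stmt_13 (p : ℕ) [Fact p.Prime]
    {K : Type*} [NormedField K] [IsUltrametricDist K]
    [Algebra ℚ_[p] K] [Algebra ℤ_[p] K] [IsScalarTower ℤ_[p] ℚ_[p] K]
    [IsAlgClosure ℚ_[p] K]
    (hK : ∀ x : ℚ_[p], ‖algebraMap ℚ_[p] K x‖ = ‖x‖)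
    (u : PowerSeries ℤ_[p])
    (hu0 : PowerSeries.coeff (R := ℤ_[p]) 0 u = 0)
    (huinv : IsUnit (PowerSeries.coeff (R := ℤ_[p]) 1 u))
    (δ n : ℕ) (hδ : δ = if p = 2 then 2 else 1) (hnδ : δ ≤ n)
    (w : PowerSeries ℤ_[p]) (hw : w = iterPS u (p ^ (n - δ)) - PowerSeries.X)
    -- the Weierstrass degree of `u^{∘p^{n-δ}}(x) - x` equals `p^n`
    (hwideg : IsUnit (PowerSeries.coeff (R := ℤ_[p]) (p ^ n) w))
    (hwlt : ∀ i < p ^ n, ¬ IsUnit (PowerSeries.coeff (R := ℤ_[p]) i w))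
    -- `π` has `v_p(π) = 1/((p-1)p^n)`
    (π : K) (hπ0 : π ≠ 0) (hπv : ‖π‖ ^ ((p - 1) * p ^ n) = (p : ℝ)⁻¹) :
    -- `u^{∘p^{n-δ}}(π) ≡ π + b_{p^n} π^{p^n} mod π^{p^n + 1}`
    ‖(fun x => evalT u x)^[p ^ (n - δ)] π -
        (π + algebraMap ℤ_[p] K (PowerSeries.coeff (R := ℤ_[p]) (p ^ n) w) * π ^ (p ^ n))‖ ≤
      ‖π‖ ^ (p ^ n + 1) ∧
    -- `u^{∘jp^{n-δ}}(π) ≡ π + j·b_{p^n} π^{p^n} mod π^{p^n + 1}` for every `j ≥ 0`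
    ∀ j : ℕ, ‖(fun x => evalT u x)^[j * p ^ (n - δ)] π -
        (π + (j : K) * algebraMap ℤ_[p] K (PowerSeries.coeff (R := ℤ_[p]) (p ^ n) w) * π ^ (p ^ n))‖ ≤
      ‖π‖ ^ (p ^ n + 1) :=
  stmt_13_general p hK u hu0 δ n hδ hnδ w hw hwlt π hπv

end
end

section
/- Let p be a prime, f ∈ Q_p[[x]] with f(0)=0 and 0 < v_p(f'(0)) < ∞. Then there exists a unique power series L ∈ Q_p[[x]] with L(0)=0 and L'(0)=1 such that L∘f = f'(0)·L; moreover for each a ∈ Q_p there exists a unique [a] ∈ Q_p[[x]] with [a](0)=0, [a]'(0)=a, and [a]∘f = f∘[a], given by [a] = L^{∘−1}(a·L(x)). -/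
/-!
Write `λ = f'(0)`. The `n`-th coefficient of `L ∘ f = λ • L` reads
`L_n (λⁿ - λ) + ∑_{k<n} L_k [xⁿ] fᵏ = 0`, and `λⁿ ≠ λ` for `n ≥ 2` because `0 < |λ| < 1`,
so this Schröder equation determines `L` coefficient by coefficient and has a solution.
Since the equation is linear in `L`, two solutions with the same coefficients in degrees `0`
and `1` coincide.

If `[a]` commutes with `f`, then `L ∘ [a]` solves the same equation with linear coefficient `a`,
so `L ∘ [a] = a • L` and `[a] = L^{∘-1} ∘ (a • L)`. Conversely `L^{∘-1} ∘ (a • L)` commutes with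
`f` because `L` conjugates `f` to multiplication by `λ`, which commutes with multiplication
by `a`.
-/

open PowerSeries

noncomputable section

theorem pow_ne_self_of_norm_lt_one {𝕜 : Type*} [NormedDivisionRing 𝕜] {x : 𝕜} (hx0 : x ≠ 0)
    (hx1 : ‖x‖ < 1) {n : ℕ} (hn : 2 ≤ n) : x ^ n ≠ x := by
  intro h
  have hlt := pow_lt_pow_right_of_lt_one₀ (norm_pos_iff.mpr hx0) hx1 (show 1 < n by omega)
  rw [pow_one, ← norm_pow, h] at hlt
  exact lt_irrefl _ hlt

namespace PowerSeries

section CommRing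

variable {R : Type*} [CommRing R]

theorem coeff_compPS (h g : R⟦X⟧) (n : ℕ) :
    coeff n (compPS h g) = ∑ k ∈ Finset.range (n + 1), coeff k h * coeff n (g ^ k) :=
  coeff_mk _ _

theorem hasSubst_of_coeff_zero {g : R⟦X⟧} (hg : coeff 0 g = 0) : HasSubst g :=
  HasSubst.of_constantCoeff_zero' (by rwa [← coeff_zero_eq_constantCoeff_apply])

theorem coeff_pow_eq_zero_of_lt_s18 {g : R⟦X⟧} (hg : coeff 0 g = 0) {n k : ℕ} (h : n < k) :
    coeff n (g ^ k) = 0 :=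
  coeff_of_lt_order _ <| (Nat.cast_lt.mpr h).trans_le <|
    le_order_pow_of_constantCoeff_eq_zero k (by rwa [← coeff_zero_eq_constantCoeff_apply])

theorem coeff_self_pow {g : R⟦X⟧} (hg : coeff 0 g = 0) (n : ℕ) :
    coeff n (g ^ n) = coeff 1 g ^ n := by
  obtain ⟨u, rfl⟩ : X ∣ g := X_dvd_iff.mpr (by rwa [← coeff_zero_eq_constantCoeff_apply])
  rw [mul_pow, coeff_X_pow_mul', if_pos le_rfl, Nat.sub_self, coeff_zero_eq_constantCoeff_apply,
    map_pow, ← zero_add 1, coeff_succ_X_mul, coeff_zero_eq_constantCoeff_apply]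

theorem compPS_eq_subst {g : R⟦X⟧} (hg : coeff 0 g = 0) (h : R⟦X⟧) :
    compPS h g = h.subst g := by
  ext n
  rw [coeff_compPS, coeff_subst' (hasSubst_of_coeff_zero hg),
    finsum_eq_sum_of_support_subset (s := Finset.range (n + 1))]
  · simp only [smul_eq_mul]
  · intro k hk
    contrapose! hk
    simp only [Finset.coe_range, Set.mem_Iio, not_lt] at hk
    simp [coeff_pow_eq_zero_of_lt_s18 hg (Nat.lt_of_succ_le hk)]

theorem coeff_zero_compPS (h g : R⟦X⟧) : coeff 0 (compPS h g) = coeff 0 h := by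
  simp [coeff_compPS]

theorem coeff_one_compPS (h g : R⟦X⟧) :
    coeff 1 (compPS h g) = coeff 1 h * coeff 1 g := by
  simp [coeff_compPS, Finset.sum_range_succ, coeff_one]

theorem coeff_compPS_eq_sum_add {g : R⟦X⟧} (hg : coeff 0 g = 0) (h : R⟦X⟧) (n : ℕ) :
    coeff n (compPS h g) =
      ∑ k ∈ Finset.range n, coeff k h * coeff n (g ^ k) + coeff n h * coeff 1 g ^ n := by
  rw [coeff_compPS, Finset.sum_range_succ, coeff_self_pow hg]

theorem compPS_sub (h₁ h₂ g : R⟦X⟧) : compPS (h₁ - h₂) g = compPS h₁ g - compPS h₂ g := by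
  ext n
  simp [coeff_compPS, sub_mul]

theorem compPS_smul (a : R) (h g : R⟦X⟧) : compPS (a • h) g = a • compPS h g := by
  ext n
  simp [coeff_compPS, Finset.mul_sum, mul_assoc]

theorem X_compPS {g : R⟦X⟧} (hg : coeff 0 g = 0) : compPS X g = g := by
  rw [compPS_eq_subst hg, subst_X (hasSubst_of_coeff_zero hg)]

theorem compPS_assoc {g e : R⟦X⟧} (hg : coeff 0 g = 0) (he : coeff 0 e = 0) (h : R⟦X⟧) :
    compPS (compPS h g) e = compPS h (compPS g e) := by
  have hge : coeff 0 (compPS g e) = 0 := by rw [coeff_zero_compPS, hg]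
  rw [compPS_eq_subst hge, compPS_eq_subst he g, compPS_eq_subst he, compPS_eq_subst hg,
    subst_comp_subst_apply (hasSubst_of_coeff_zero hg) (hasSubst_of_coeff_zero he)]

theorem exists_compPS_inverse {g : R⟦X⟧} (hg0 : coeff 0 g = 0) (hg1 : IsUnit (coeff 1 g)) :
    ∃ ginv : R⟦X⟧, compPS ginv g = X ∧ compPS g ginv = X := by
  have hc : constantCoeff g = 0 := by rwa [← coeff_zero_eq_constantCoeff_apply]
  refine ⟨g.substInvOfIsUnit hg1, ?_, ?_⟩
  · rw [compPS_eq_subst hg0, subst_substInvOfIsUnit_left _ hc]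
  · rw [compPS_eq_subst (by simp [coeff_zero_eq_constantCoeff_apply]),
      subst_substInvOfIsUnit_right _ hc]

theorem compPS_left_cancel {L Linv u v : R⟦X⟧} (hL : coeff 0 L = 0) (hinv : compPS Linv L = X)
    (hu : coeff 0 u = 0) (hv : coeff 0 v = 0) (h : compPS L u = compPS L v) : u = v := by
  rw [← X_compPS hu, ← X_compPS hv, ← hinv, compPS_assoc hL hu, compPS_assoc hL hv, h]

end CommRing

section Field

variable {K : Type*} [Field K]

/-- Coefficients of the solution `L` of Schröder's equation `L ∘ g = g'(0) • L`, `L'(0) = 1`: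
the `n`-th coefficient of the equation reads `L_n (g'(0) - g'(0)ⁿ) = ∑_{k<n} L_k [xⁿ] gᵏ`. -/
def schroderCoeff (g : K⟦X⟧) : ℕ → K
  | 0 => 0
  | 1 => 1
  | n + 2 => (∑ k : Fin (n + 2), schroderCoeff g k * coeff (n + 2) (g ^ (k : ℕ))) /
      (coeff 1 g - coeff 1 g ^ (n + 2))

def schroderSeries (g : K⟦X⟧) : K⟦X⟧ := mk (schroderCoeff g)

theorem coeff_zero_schroderSeries (g : K⟦X⟧) : coeff 0 (schroderSeries g) = 0 := by
  simp [schroderSeries, schroderCoeff]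

theorem coeff_one_schroderSeries (g : K⟦X⟧) : coeff 1 (schroderSeries g) = 1 := by
  simp [schroderSeries, schroderCoeff]

variable {g : K⟦X⟧}

theorem compPS_schroderSeries (hg0 : coeff 0 g = 0)
    (hg : ∀ n, 2 ≤ n → coeff 1 g ^ n ≠ coeff 1 g) :
    compPS (schroderSeries g) g = coeff 1 g • schroderSeries g := by
  ext n
  rw [coeff_compPS_eq_sum_add hg0, map_smul, smul_eq_mul]
  match n with
  | 0 => simp [schroderSeries, schroderCoeff]
  | 1 => simp [schroderSeries, schroderCoeff, mul_comm]
  | n + 2 =>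
    have hne : coeff 1 g - coeff 1 g ^ (n + 2) ≠ 0 :=
      sub_ne_zero.mpr (hg (n + 2) (by omega)).symm
    simp only [schroderSeries, coeff_mk, schroderCoeff, Fin.sum_univ_eq_sum_range
      (fun k => schroderCoeff g k * coeff (n + 2) (g ^ k))]
    field_simp
    ring

theorem eq_zero_of_compPS_eq_smul (hg0 : coeff 0 g = 0)
    (hg : ∀ n, 2 ≤ n → coeff 1 g ^ n ≠ coeff 1 g) {D : K⟦X⟧} (hD0 : coeff 0 D = 0)
    (hD1 : coeff 1 D = 0) (hD : compPS D g = coeff 1 g • D) : D = 0 := by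
  ext n
  induction n using Nat.strong_induction_on with
  | _ n ih =>
    match n, ih with
    | 0, _ => rw [hD0, map_zero]
    | 1, _ => rw [hD1, map_zero]
    | n + 2, ih =>
      have h := congrArg (coeff (n + 2)) hD
      rw [coeff_compPS_eq_sum_add hg0, Finset.sum_eq_zero fun k hk => by
        rw [ih k (Finset.mem_range.mp hk), map_zero, zero_mul], zero_add, map_smul,
        smul_eq_mul] at h
      have h' : coeff (n + 2) D * (coeff 1 g ^ (n + 2) - coeff 1 g) = 0 := by
        linear_combination h
      simpa using (mul_eq_zero.mp h').resolve_right (sub_ne_zero.mpr (hg _ (by omega)))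

theorem eq_of_compPS_eq_smul (hg0 : coeff 0 g = 0)
    (hg : ∀ n, 2 ≤ n → coeff 1 g ^ n ≠ coeff 1 g) {M N : K⟦X⟧} (h0 : coeff 0 M = coeff 0 N)
    (h1 : coeff 1 M = coeff 1 N) (hM : compPS M g = coeff 1 g • M)
    (hN : compPS N g = coeff 1 g • N) : M = N :=
  sub_eq_zero.mp <| eq_zero_of_compPS_eq_smul hg0 hg (by rw [map_sub, h0, sub_self])
    (by rw [map_sub, h1, sub_self]) (by rw [compPS_sub, hM, hN, smul_sub])

end Field

section Conjugation

variable {R : Type*} [CommRing R] {L Linv : R⟦X⟧}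

theorem coeff_zero_eq_zero_of_compPS_eq_X {g : R⟦X⟧} (h : compPS Linv g = X) :
    coeff 0 Linv = 0 := by
  rw [← coeff_zero_compPS Linv g, h, coeff_zero_X]

theorem compPS_compPS_inv (hright : compPS L Linv = X) (hleft : compPS Linv L = X) {u : R⟦X⟧}
    (hu : coeff 0 u = 0) : compPS L (compPS Linv u) = u := by
  rw [← compPS_assoc (coeff_zero_eq_zero_of_compPS_eq_X hleft) hu, hright, X_compPS hu]

theorem compPS_inv_smul_comm {f : R⟦X⟧} {c : R} (hf0 : coeff 0 f = 0) (hL0 : coeff 0 L = 0)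
    (hLf : compPS L f = c • L) (hleft : compPS Linv L = X) (hright : compPS L Linv = X) (a : R) :
    compPS (compPS Linv (a • L)) f = compPS f (compPS Linv (a • L)) := by
  have haL0 : coeff 0 (a • L) = 0 := by rw [map_smul, hL0, smul_zero]
  have hB0 : coeff 0 (compPS Linv (a • L)) = 0 := by
    rw [coeff_zero_compPS, coeff_zero_eq_zero_of_compPS_eq_X hleft]
  have hLB := compPS_compPS_inv hright hleft haL0
  refine compPS_left_cancel hL0 hleft (by rw [coeff_zero_compPS, hB0])
    (by rw [coeff_zero_compPS, hf0]) ?_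
  rw [← compPS_assoc hB0 hf0, hLB, compPS_smul, hLf, ← compPS_assoc hf0 hB0, hLf, compPS_smul,
    hLB, smul_comm]

end Conjugation

theorem eq_compPS_inv_smul_of_comm {K : Type*} [Field K] {f L Linv A : K⟦X⟧} {a : K}
    (hf0 : coeff 0 f = 0) (hf : ∀ n, 2 ≤ n → coeff 1 f ^ n ≠ coeff 1 f) (hL0 : coeff 0 L = 0)
    (hL1 : coeff 1 L = 1) (hLf : compPS L f = coeff 1 f • L) (hleft : compPS Linv L = X)
    (hright : compPS L Linv = X) (hA0 : coeff 0 A = 0) (hA1 : coeff 1 A = a)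
    (hA : compPS A f = compPS f A) : A = compPS Linv (a • L) := by
  have haL0 : coeff 0 (a • L) = 0 := by rw [map_smul, hL0, smul_zero]
  refine compPS_left_cancel hL0 hleft hA0
    (by rw [coeff_zero_compPS, coeff_zero_eq_zero_of_compPS_eq_X hleft]) ?_
  rw [compPS_compPS_inv hright hleft haL0]
  refine eq_of_compPS_eq_smul hf0 hf (by rw [coeff_zero_compPS, hL0, haL0])
    (by rw [coeff_one_compPS, hL1, hA1, map_smul, hL1, smul_eq_mul, one_mul, mul_one]) ?_
    (by rw [compPS_smul, hLf, smul_comm])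
  rw [compPS_assoc hA0 hf0, hA, ← compPS_assoc hf0 hA0, hLf, compPS_smul]

end PowerSeries

open PowerSeries in
/-- Lubin's logarithm `L_f` and the series `[a]_f = L^{∘-1}(a·L)`. -/
theorem stmt_18 (p : ℕ) [Fact p.Prime]
    (f : PowerSeries ℚ_[p])
    (hf0 : PowerSeries.coeff (R := ℚ_[p]) 0 f = 0)
    -- `0 < v_p(f'(0)) < ∞`
    (hf1ne : PowerSeries.coeff (R := ℚ_[p]) 1 f ≠ 0)
    (hf1v : ‖PowerSeries.coeff (R := ℚ_[p]) 1 f‖ < 1) :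
    -- there is a unique `L` with `L(0) = 0`, `L'(0) = 1` and `L ∘ f = f'(0)·L`
    (∃! L : PowerSeries ℚ_[p],
      PowerSeries.coeff (R := ℚ_[p]) 0 L = 0 ∧ PowerSeries.coeff (R := ℚ_[p]) 1 L = 1 ∧
      compPS L f = (PowerSeries.coeff (R := ℚ_[p]) 1 f) • L) ∧
    -- for each `a` there is a unique `[a]` with `[a](0) = 0`, `[a]'(0) = a`,
    -- `[a] ∘ f = f ∘ [a]`, and it is given by `[a] = L^{∘-1}(a·L(x))`
    (∀ L : PowerSeries ℚ_[p],
      (PowerSeries.coeff (R := ℚ_[p]) 0 L = 0 ∧ PowerSeries.coeff (R := ℚ_[p]) 1 L = 1 ∧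
        compPS L f = (PowerSeries.coeff (R := ℚ_[p]) 1 f) • L) →
      ∀ a : ℚ_[p],
        (∃! A : PowerSeries ℚ_[p],
          PowerSeries.coeff (R := ℚ_[p]) 0 A = 0 ∧ PowerSeries.coeff (R := ℚ_[p]) 1 A = a ∧
          compPS A f = compPS f A) ∧
        (∀ Linv : PowerSeries ℚ_[p],
          compPS Linv L = PowerSeries.X → compPS L Linv = PowerSeries.X →
          (PowerSeries.coeff (R := ℚ_[p]) 0 (compPS Linv (a • L)) = 0 ∧
           PowerSeries.coeff (R := ℚ_[p]) 1 (compPS Linv (a • L)) = a ∧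
           compPS (compPS Linv (a • L)) f = compPS f (compPS Linv (a • L))))) := by
  have hf : ∀ n, 2 ≤ n → coeff 1 f ^ n ≠ coeff 1 f := fun n hn =>
    pow_ne_self_of_norm_lt_one hf1ne hf1v hn
  have hL := compPS_schroderSeries hf0 hf
  refine ⟨⟨schroderSeries f, ⟨coeff_zero_schroderSeries f, coeff_one_schroderSeries f, hL⟩,
    fun M ⟨hM0, hM1, hM⟩ => eq_of_compPS_eq_smul hf0 hf (by rw [hM0, coeff_zero_schroderSeries])
      (by rw [hM1, coeff_one_schroderSeries]) hM hL⟩, ?_⟩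
  rintro L ⟨hL0, hL1, hLf⟩ a
  have hspec : ∀ Linv : ℚ_[p]⟦X⟧, compPS Linv L = X → compPS L Linv = X →
      coeff 0 (compPS Linv (a • L)) = 0 ∧ coeff 1 (compPS Linv (a • L)) = a ∧
        compPS (compPS Linv (a • L)) f = compPS f (compPS Linv (a • L)) := by
    intro Linv hleft hright
    have hLinv1 : coeff 1 Linv = 1 := by
      simpa [coeff_one_compPS, hL1] using congrArg (coeff 1) hleft
    refine ⟨by rw [coeff_zero_compPS, coeff_zero_eq_zero_of_compPS_eq_X hleft], ?_,
      compPS_inv_smul_comm hf0 hL0 hLf hleft hright a⟩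
    rw [coeff_one_compPS, hLinv1, map_smul, hL1, smul_eq_mul, one_mul, mul_one]
  obtain ⟨Linv, hleft, hright⟩ := exists_compPS_inverse hL0 (by rw [hL1]; exact isUnit_one)
  exact ⟨⟨compPS Linv (a • L), hspec Linv hleft hright, fun A ⟨hA0, hA1, hA⟩ =>
    eq_compPS_inv_smul_of_comm hf0 hf hL0 hL1 hLf hleft hright hA0 hA1 hA⟩, hspec⟩
end
end
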